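/- Let W and A be measurable spaces, μ = μ̄_1 ⊗ ⋯ ⊗ μ̄_n a database distribution on W^n, F = (F_m : W^m → A)_m a family of measurable queries, 𝒯 and 𝒯̂ probability distributions on sampling templates, and ν a coupling of 𝒯 and 𝒯̂. Then for every index j, every ε ≥ 0 and all v, w ∈ supp(μ̄_j): Δ_ε( Σ_τ 𝒯(τ)·(F∘SAMP_τ)_* μ_{j,v} , Σ_{τ̂} 𝒯̂(τ̂)·(F∘SAMP_τ̂)_* μ_{j,w} ) ≤ E_{(τ,τ̂)∼ν}[ sup_{v',w' ∈ W} Δ_ε( (F∘SAMP_τ)_* μ_{j,v'} , (F∘SAMP_τ̂)_* μ_{j,w'} ) ]. -/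
import Mathlib


open MeasureTheory Real
open scoped ENNReal

noncomputable section

/-- Hockey-stick divergence / privacy curve `Δ_ε(μ,ν)`. -/
def hsDiv {A : Type*} [MeasurableSpace A] (ε : ℝ) (μ ν : Measure A) : ℝ :=
  ⨆ S : {S : Set A // MeasurableSet S}, ((μ S.1).toReal - Real.exp ε * (ν S.1).toReal)

/-- Subsampling map induced by a template. -/
def SAMP {W : Type*} {n m : ℕ} (τ : Fin m → Fin n) (x : Fin n → W) : Fin m → W :=
  fun i => x (τ i)

/-- Product measure with `j`-th factor replaced by the Dirac measure at `v`. -/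
def fixEntry {W : Type*} [MeasurableSpace W] {n : ℕ} (μbar : Fin n → Measure W)
    (j : Fin n) (v : W) : Measure (Fin n → W) :=
  Measure.pi (Function.update μbar j (Measure.dirac v))

open Classical in
/-- Sampling privacy curve `SPC^j` : conditional expectation over templates containing `j`. -/
def SPCj {W A : Type*} [MeasurableSpace W] [MeasurableSpace A] {n m : ℕ}
    (F : (Fin m → W) → A) (μbar : Fin n → Measure W)
    (𝒯 : (Fin m → Fin n) → ℝ≥0∞) (j : Fin n) (ε : ℝ) : ℝ :=
  (∑ τ : Fin m → Fin n, if j ∈ Set.range τ then (𝒯 τ).toReal *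
      (⨆ v : W, ⨆ w : W, hsDiv ε (Measure.map (fun x => F (SAMP τ x)) (fixEntry μbar j v))
        (Measure.map (fun x => F (SAMP τ x)) (fixEntry μbar j w))) else 0) /
  (∑ τ : Fin m → Fin n, if j ∈ Set.range τ then (𝒯 τ).toReal else 0)

open Classical in
/-- Uniform distribution on injective templates (sampling without replacement). -/
def uniformInj (n m : ℕ) : (Fin m → Fin n) → ℝ≥0∞ :=
  fun τ => if Function.Injective τ then
    ((Finset.univ.filter (fun σ : Fin m → Fin n => Function.Injective σ)).card : ℝ≥0∞)⁻¹ else 0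

open Classical in
/-- Conditioning of a distribution on templates to an event. -/
def condDist {n m : ℕ} (𝒯 : (Fin m → Fin n) → ℝ≥0∞) (E : Set (Fin m → Fin n)) :
    (Fin m → Fin n) → ℝ≥0∞ :=
  fun τ => if τ ∈ E then 𝒯 τ / (∑ σ : Fin m → Fin n, if σ ∈ E then 𝒯 σ else 0) else 0

/-- The increasing enumeration of a finite set of indices, as a sampling template. -/
def poissonTemplate {n : ℕ} (s : Finset (Fin n)) : Fin s.card → Fin n :=
  fun i => (s.orderIsoOfFin rfl i : Fin n)

/-- Statistical privacy curve of a query. -/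
def Phi {W A : Type*} [MeasurableSpace W] [MeasurableSpace A] {k : ℕ}
    (μbar : Fin k → Measure W) (F : (Fin k → W) → A) (ε : ℝ) : ℝ :=
  ⨆ j : Fin k, ⨆ v : W, ⨆ w : W,
    hsDiv ε (Measure.map F (fixEntry μbar j v)) (Measure.map F (fixEntry μbar j w))

/-- trade-off function -/
def tradeOff {A : Type*} [MeasurableSpace A] (P Q : Measure A) (α : ℝ) : ℝ :=
  sInf { y | ∃ S : Set A, MeasurableSet S ∧ (P Sᶜ).toReal ≤ α ∧ y = (Q S).toReal }

/-- total variation distance -/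
def tvDist {A : Type*} [MeasurableSpace A] (μ ν : Measure A) : ℝ :=
  ⨆ S : {S : Set A // MeasurableSet S}, |(μ S.1).toReal - (ν S.1).toReal|

/-- support of a measure -/
def msupport {X : Type*} [TopologicalSpace X] [MeasurableSpace X] (μ : Measure X) : Set X :=
  {x | ∀ U : Set X, IsOpen U → x ∈ U → 0 < μ U}

/-- τ ≈_j σ -/
def ApproxAt {n m : ℕ} (j : Fin n) (τ σ : Fin m → Fin n) : Prop :=
  ∀ i, (τ i ≠ j → σ i = τ i) ∧ (τ i = j → σ i ≠ j)

/-- F-samplable -/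
def FSamplable {W : Type*} [MeasurableSpace W] {n m : ℕ}
    (μbar : Fin n → Measure W) (F : (Fin m → W) → ℝ) : Prop :=
  ∀ (τ σ : Fin m → Fin n) (j : Fin n) (v w : W) (ε : ℝ), 0 ≤ ε →
    ∃ S : Set ℝ, ((∃ a, S = Set.Iic a) ∨ (∃ a, S = Set.Ici a) ∨ S = ∅) ∧
      ((Measure.map (fun x => F (SAMP τ x)) (fixEntry μbar j v)) S).toReal -
        Real.exp ε * ((Measure.map (fun x => F (SAMP σ x)) (fixEntry μbar j w)) S).toReal =
      hsDiv ε (Measure.map (fun x => F (SAMP τ x)) (fixEntry μbar j v))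
        (Measure.map (fun x => F (SAMP σ x)) (fixEntry μbar j w))

/-- Sampling templates of arbitrary size, drawing from `Fin n`. -/
def Templ (n : ℕ) : Type := Σ m : ℕ, Fin m → Fin n


section Helpers

variable {W A : Type*} [MeasurableSpace W] [MeasurableSpace A]

lemma fixEntry_prob {n : ℕ} (μbar : Fin n → Measure W)
    (hμ : ∀ i, IsProbabilityMeasure (μbar i)) (j : Fin n) (v : W) :
    IsProbabilityMeasure (fixEntry μbar j v) := by
  haveI : ∀ i, IsProbabilityMeasure (Function.update μbar j (Measure.dirac v) i) := by
    intro i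
    rcases eq_or_ne i j with h | h
    · subst h; simp only [Function.update_self]; infer_instance
    · simp only [Function.update_of_ne h]; exact hμ i
  unfold fixEntry
  infer_instance

lemma measurable_SAMP {n m : ℕ} (τ : Fin m → Fin n) :
    Measurable (SAMP τ : (Fin n → W) → Fin m → W) :=
  measurable_pi_lambda _ fun i => measurable_pi_apply _

lemma hsDiv_term_le_one {ε : ℝ} (P Q : Measure A) [IsProbabilityMeasure P]
    (S : {S : Set A // MeasurableSet S}) :
    (P S.1).toReal - Real.exp ε * (Q S.1).toReal ≤ 1 := by
  have h1 : (P S.1).toReal ≤ 1 := by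
    have := prob_le_one (μ := P) (s := S.1)
    simpa using ENNReal.toReal_mono ENNReal.one_ne_top this
  have h2 : 0 ≤ Real.exp ε * (Q S.1).toReal :=
    mul_nonneg (Real.exp_pos ε).le ENNReal.toReal_nonneg
  linarith

lemma hsDiv_bddAbove {ε : ℝ} (P Q : Measure A) [IsProbabilityMeasure P] :
    BddAbove (Set.range fun S : {S : Set A // MeasurableSet S} =>
      (P S.1).toReal - Real.exp ε * (Q S.1).toReal) := by
  refine ⟨1, ?_⟩
  rintro x ⟨S, rfl⟩
  exact hsDiv_term_le_one P Q S

lemma hsDiv_le_one {ε : ℝ} (P Q : Measure A) [IsProbabilityMeasure P] :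
    hsDiv ε P Q ≤ 1 := by
  refine ciSup_le fun S => hsDiv_term_le_one P Q S

lemma hsDiv_nonneg {ε : ℝ} (P Q : Measure A) [IsProbabilityMeasure P] :
    0 ≤ hsDiv ε P Q := by
  have := le_ciSup (hsDiv_bddAbove (ε := ε) P Q) (⟨∅, MeasurableSet.empty⟩ :
    {S : Set A // MeasurableSet S})
  simpa [hsDiv] using this

lemma le_hsDiv {ε : ℝ} (P Q : Measure A) [IsProbabilityMeasure P]
    {S : Set A} (hS : MeasurableSet S) :
    (P S).toReal - Real.exp ε * (Q S).toReal ≤ hsDiv ε P Q :=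
  le_ciSup (hsDiv_bddAbove (ε := ε) P Q) (⟨S, hS⟩ : {S : Set A // MeasurableSet S})

end Helpers

/-- the divergence between two coupled sampled mixtures is bounded by the
expected worst-case divergence under the coupling. -/
theorem hsDiv_sampled_le_coupled_SPC
    {W A : Type*} [MeasurableSpace W] [TopologicalSpace W] [MeasurableSpace A] {n : ℕ}
    (μbar : Fin n → Measure W) (hμ : ∀ i, IsProbabilityMeasure (μbar i))
    (F : ∀ m : ℕ, (Fin m → W) → A) (hF : ∀ m, Measurable (F m))
    (T T' : Templ n → ℝ≥0∞) (hT : ∑' τ, T τ = 1) (hT' : ∑' τ, T' τ = 1)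
    (ν : Templ n × Templ n → ℝ≥0∞)
    (hνfst : ∀ τ, ∑' σ : Templ n, ν (τ, σ) = T τ)
    (hνsnd : ∀ σ, ∑' τ : Templ n, ν (τ, σ) = T' σ)
    (j : Fin n) (ε : ℝ) (hε : 0 ≤ ε)
    (v w : W) (hv : v ∈ msupport (μbar j)) (hw : w ∈ msupport (μbar j)) :
    hsDiv ε
      (Measure.sum fun τ : Templ n =>
        T τ • Measure.map (fun x => F τ.1 (SAMP τ.2 x)) (fixEntry μbar j v))
      (Measure.sum fun σ : Templ n =>
        T' σ • Measure.map (fun x => F σ.1 (SAMP σ.2 x)) (fixEntry μbar j w))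
      ≤ ∑' q : Templ n × Templ n, (ν q).toReal *
          (⨆ v' : W, ⨆ w' : W, hsDiv ε
            (Measure.map (fun x => F q.1.1 (SAMP q.1.2 x)) (fixEntry μbar j v'))
            (Measure.map (fun x => F q.2.1 (SAMP q.2.2 x)) (fixEntry μbar j w'))) := by
  classical
  haveI : Nonempty W := ⟨v⟩
  -- measures
  set P : Templ n → Measure A :=
    fun τ => Measure.map (fun x => F τ.1 (SAMP τ.2 x)) (fixEntry μbar j v) with hP
  set Q : Templ n → Measure A :=
    fun σ => Measure.map (fun x => F σ.1 (SAMP σ.2 x)) (fixEntry μbar j w) with hQ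
  have hPprob : ∀ τ, IsProbabilityMeasure (P τ) := by
    intro τ
    haveI := fixEntry_prob μbar hμ j v
    exact Measure.isProbabilityMeasure_map (((hF τ.1).comp (measurable_SAMP τ.2)).aemeasurable)
  have hQprob : ∀ σ, IsProbabilityMeasure (Q σ) := by
    intro σ
    haveI := fixEntry_prob μbar hμ j w
    exact Measure.isProbabilityMeasure_map (((hF σ.1).comp (measurable_SAMP σ.2)).aemeasurable)
  have hPvw : ∀ (v' : W) (q : Templ n),
      IsProbabilityMeasure (Measure.map (fun x => F q.1 (SAMP q.2 x)) (fixEntry μbar j v')) := by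
    intro v' q
    haveI := fixEntry_prob μbar hμ j v'
    exact Measure.isProbabilityMeasure_map (((hF q.1).comp (measurable_SAMP q.2)).aemeasurable)
  -- the sup-sup term
  set D : Templ n × Templ n → ℝ := fun q =>
    ⨆ v' : W, ⨆ w' : W, hsDiv ε
      (Measure.map (fun x => F q.1.1 (SAMP q.1.2 x)) (fixEntry μbar j v'))
      (Measure.map (fun x => F q.2.1 (SAMP q.2.2 x)) (fixEntry μbar j w')) with hD
  have hDle1 : ∀ q, D q ≤ 1 := by
    intro q
    refine ciSup_le fun v' => ciSup_le fun w' => ?_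
    haveI := hPvw v' q.1
    exact hsDiv_le_one _ _
  have hinner_bdd : ∀ (q : Templ n × Templ n) (v' : W),
      BddAbove (Set.range fun w' : W => hsDiv ε
        (Measure.map (fun x => F q.1.1 (SAMP q.1.2 x)) (fixEntry μbar j v'))
        (Measure.map (fun x => F q.2.1 (SAMP q.2.2 x)) (fixEntry μbar j w'))) := by
    intro q v'
    refine ⟨1, ?_⟩
    rintro x ⟨w', rfl⟩
    haveI := hPvw v' q.1
    exact hsDiv_le_one _ _
  have houter_bdd : ∀ (q : Templ n × Templ n),
      BddAbove (Set.range fun v' : W => ⨆ w' : W, hsDiv ε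
        (Measure.map (fun x => F q.1.1 (SAMP q.1.2 x)) (fixEntry μbar j v'))
        (Measure.map (fun x => F q.2.1 (SAMP q.2.2 x)) (fixEntry μbar j w'))) := by
    intro q
    refine ⟨1, ?_⟩
    rintro x ⟨v', rfl⟩
    refine ciSup_le fun w' => ?_
    haveI := hPvw v' q.1
    exact hsDiv_le_one _ _
  have hhsDivD : ∀ q : Templ n × Templ n, hsDiv ε (P q.1) (Q q.2) ≤ D q := by
    intro q
    have h1 : hsDiv ε (P q.1) (Q q.2) ≤ ⨆ w' : W, hsDiv ε (P q.1)
        (Measure.map (fun x => F q.2.1 (SAMP q.2.2 x)) (fixEntry μbar j w')) :=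
      le_ciSup (hinner_bdd q v) w
    refine h1.trans ?_
    exact le_ciSup (houter_bdd q) v
  have hDnonneg : ∀ q, 0 ≤ D q := by
    intro q
    haveI := hPprob q.1
    exact (hsDiv_nonneg (ε := ε) (P q.1) (Q q.2)).trans (hhsDivD q)
  -- total mass of ν
  have hνtot : ∑' q : Templ n × Templ n, ν q = 1 := by
    rw [ENNReal.tsum_prod']
    simpa [hνfst] using hT
  have hνfin : ∀ q : Templ n × Templ n, ν q ≠ ∞ := by
    intro q
    have : ν q ≤ 1 := hνtot ▸ ENNReal.le_tsum q
    exact (this.trans_lt ENNReal.one_lt_top).ne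
  have hνsummable : Summable fun q : Templ n × Templ n => (ν q).toReal :=
    ENNReal.summable_toReal (by rw [hνtot]; exact ENNReal.one_ne_top)
  -- RHS summable
  have hRHSsummable : Summable fun q : Templ n × Templ n => (ν q).toReal * D q := by
    refine Summable.of_nonneg_of_le (fun q => mul_nonneg ENNReal.toReal_nonneg (hDnonneg q))
      (fun q => ?_) hνsummable
    calc (ν q).toReal * D q ≤ (ν q).toReal * 1 :=
          mul_le_mul_of_nonneg_left (hDle1 q) ENNReal.toReal_nonneg
      _ = (ν q).toReal := mul_one _
  -- main bound via ciSup_le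
  refine ciSup_le ?_
  rintro ⟨S, hS⟩
  -- decompose the two mixture measures
  have hμmix : (Measure.sum fun τ : Templ n => T τ • P τ) S = ∑' q : Templ n × Templ n, ν q * P q.1 S := by
    rw [Measure.sum_apply _ hS, ENNReal.tsum_prod']
    refine tsum_congr fun τ => ?_
    rw [Measure.smul_apply, smul_eq_mul, ← hνfst τ]
    exact (ENNReal.tsum_mul_right).symm
  have hνmix : (Measure.sum fun σ : Templ n => T' σ • Q σ) S = ∑' q : Templ n × Templ n, ν q * Q q.2 S := by
    rw [Measure.sum_apply _ hS, ENNReal.tsum_prod', ENNReal.tsum_comm]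
    refine tsum_congr fun σ => ?_
    rw [Measure.smul_apply, smul_eq_mul, ← hνsnd σ]
    exact (ENNReal.tsum_mul_right).symm
  have htermfinP : ∀ q : Templ n × Templ n, ν q * P q.1 S ≠ ∞ := by
    intro q
    have : ν q * P q.1 S ≤ ν q * 1 := mul_le_mul_right (prob_le_one) _
    exact ((this.trans (le_of_eq (mul_one _))).trans_lt (lt_top_iff_ne_top.mpr (hνfin q))).ne
  have htermfinQ : ∀ q : Templ n × Templ n, ν q * Q q.2 S ≠ ∞ := by
    intro q
    have : ν q * Q q.2 S ≤ ν q * 1 := mul_le_mul_right (prob_le_one) _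
    exact ((this.trans (le_of_eq (mul_one _))).trans_lt (lt_top_iff_ne_top.mpr (hνfin q))).ne
  have hsumfinP : (∑' q : Templ n × Templ n, ν q * P q.1 S) ≠ ∞ := by
    have : (∑' q : Templ n × Templ n, ν q * P q.1 S) ≤ ∑' q : Templ n × Templ n, ν q := by
      refine ENNReal.tsum_le_tsum fun q => ?_
      calc ν q * P q.1 S ≤ ν q * 1 := mul_le_mul_right (prob_le_one) _
        _ = ν q := mul_one _
    rw [hνtot] at this
    exact (this.trans_lt ENNReal.one_lt_top).ne
  have hsumfinQ : (∑' q : Templ n × Templ n, ν q * Q q.2 S) ≠ ∞ := by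
    have : (∑' q : Templ n × Templ n, ν q * Q q.2 S) ≤ ∑' q : Templ n × Templ n, ν q := by
      refine ENNReal.tsum_le_tsum fun q => ?_
      calc ν q * Q q.2 S ≤ ν q * 1 := mul_le_mul_right (prob_le_one) _
        _ = ν q := mul_one _
    rw [hνtot] at this
    exact (this.trans_lt ENNReal.one_lt_top).ne
  have hsummP : Summable fun q : Templ n × Templ n => (ν q * P q.1 S).toReal :=
    ENNReal.summable_toReal hsumfinP
  have hsummQ : Summable fun q : Templ n × Templ n => (ν q * Q q.2 S).toReal :=
    ENNReal.summable_toReal hsumfinQ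
  have h1 : ((Measure.sum fun τ : Templ n => T τ • P τ) S).toReal
      = ∑' q : Templ n × Templ n, (ν q * P q.1 S).toReal := by
    rw [hμmix, ENNReal.tsum_toReal_eq htermfinP]
  have h2 : ((Measure.sum fun σ : Templ n => T' σ • Q σ) S).toReal
      = ∑' q : Templ n × Templ n, (ν q * Q q.2 S).toReal := by
    rw [hνmix, ENNReal.tsum_toReal_eq htermfinQ]
  rw [h1, h2]
  have heq : ∑' q : Templ n × Templ n, (ν q * P q.1 S).toReal
      - Real.exp ε * ∑' q : Templ n × Templ n, (ν q * Q q.2 S).toReal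
      = ∑' q : Templ n × Templ n,
          ((ν q * P q.1 S).toReal - Real.exp ε * (ν q * Q q.2 S).toReal) := by
    rw [← tsum_mul_left, Summable.tsum_sub hsummP (hsummQ.mul_left _)]
  rw [heq]
  refine Summable.tsum_le_tsum (fun q => ?_) ((hsummP.sub (hsummQ.mul_left _))) hRHSsummable
  have : (ν q * P q.1 S).toReal - Real.exp ε * (ν q * Q q.2 S).toReal
      = (ν q).toReal * ((P q.1 S).toReal - Real.exp ε * (Q q.2 S).toReal) := by
    rw [ENNReal.toReal_mul, ENNReal.toReal_mul]; ring
  rw [this]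
  refine mul_le_mul_of_nonneg_left ?_ ENNReal.toReal_nonneg
  haveI := hPprob q.1
  exact (le_hsDiv (P q.1) (Q q.2) hS).trans (hhsDivD q)


end
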